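/- arXiv:1311.2109 — 8 statements merged into one kernel-verified Lean document; each statement's English description precedes it below -/
import Mathlib

section
/- Let (a_n) and (b_n) be sequences of real numbers with a_n > 0 for every n. If b_n/a_n converges monotonically to a limit L ∈ ℝ, and sup_n (1/n) Σ_{k=1}^n |a_{k+1} - a_k| < ∞, then lim_{n→∞} (1/n) Σ_{k=1}^n |(b_{k+1} - b_k) - L(a_{k+1} - a_k)| = 0. -/
/-!
Put `d n := |b n / a n - L|`. Monotone convergence means that `b n / a n - L` has a constant sign,
so `b n - L * a n = ± d n * a n` with `d` antitone and tending to `0`, and it suffices to show that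
the increments of `e n := d n * a n` are small in Cesàro mean. Splitting
`Δe k = (d (k+1) - d k) * a (k+1) + d k * Δa k`, the first summand is `≤ 0`, so
`|Δe k| ≤ -Δe k + 2 * d k * |Δa k|`. The first part telescopes to at most `e 1`, and Abel summation
against the bound `∑_{k ≤ n} |Δa k| ≤ C * n` gives `∑_{k ≤ n} d k * |Δa k| ≤ C * ∑_{k ≤ n} d k`,
which is `o(n)` because `d → 0`.
-/

open Filter Finset Topology

theorem abs_mul_sub_mul_le {d d' x x' : ℝ} (hd : d' ≤ d) (hd0 : 0 ≤ d) (hx' : 0 ≤ x') :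
    |d' * x' - d * x| ≤ (d * x - d' * x') + 2 * (d * |x' - x|) := by
  have hfirst : (d' - d) * x' ≤ 0 := mul_nonpos_of_nonpos_of_nonneg (sub_nonpos.2 hd) hx'
  have hsecond : d * (x' - x) ≤ d * |x' - x| := mul_le_mul_of_nonneg_left (le_abs_self _) hd0
  calc |d' * x' - d * x| = |(d' - d) * x' + d * (x' - x)| := by ring_nf
    _ ≤ |(d' - d) * x'| + |d * (x' - x)| := abs_add_le _ _
    _ = -((d' - d) * x') + d * |x' - x| := by rw [abs_of_nonpos hfirst, abs_mul, abs_of_nonneg hd0]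
    _ ≤ (d * x - d' * x') + 2 * (d * |x' - x|) := by linarith

section

variable {d a w : ℕ → ℝ} {C : ℝ}

theorem sum_Icc_mul_le_of_antitone (hd : Antitone d) (hd0 : ∀ k, 0 ≤ d k)
    (hw : ∀ n : ℕ, ∑ k ∈ Icc 1 n, w k ≤ C * n) (n : ℕ) :
    ∑ k ∈ Icc 1 n, d k * w k ≤ C * ∑ k ∈ Icc 1 n, d k := by
  have abel : ∀ n : ℕ, ∑ k ∈ Icc 1 n, d k * w k
      ≤ C * ∑ k ∈ Icc 1 n, d k + d n * (∑ k ∈ Icc 1 n, w k - C * n) := by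
    intro n
    induction n with
    | zero => simp
    | succ n ih =>
      rw [sum_Icc_succ_top (by omega), sum_Icc_succ_top (by omega), sum_Icc_succ_top (by omega)]
      have := mul_le_mul_of_nonpos_right (hd n.le_succ) (sub_nonpos.2 (hw n))
      push_cast
      linarith
  linarith [abel n, mul_nonpos_of_nonneg_of_nonpos (hd0 n) (sub_nonpos.2 (hw n))]

theorem sum_abs_sub_mul_le (hd : Antitone d) (hd0 : ∀ k, 0 ≤ d k) (ha : ∀ k, 0 ≤ a k)
    (hw : ∀ n : ℕ, ∑ k ∈ Icc 1 n, |a (k + 1) - a k| ≤ C * n) (n : ℕ) :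
    ∑ k ∈ Icc 1 n, |d (k + 1) * a (k + 1) - d k * a k|
      ≤ d 1 * a 1 + 2 * C * ∑ k ∈ Icc 1 n, d k := by
  obtain rfl | hn := n.eq_zero_or_pos
  · simpa using mul_nonneg (hd0 1) (ha 1)
  have htel : ∑ k ∈ Icc 1 n, (d k * a k - d (k + 1) * a (k + 1))
      = d 1 * a 1 - d (n + 1) * a (n + 1) := by
    rw [← neg_inj, ← sum_neg_distrib]
    simpa using sum_Icc_sub hn fun k => d k * a k
  calc ∑ k ∈ Icc 1 n, |d (k + 1) * a (k + 1) - d k * a k|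
      ≤ ∑ k ∈ Icc 1 n, ((d k * a k - d (k + 1) * a (k + 1)) + 2 * (d k * |a (k + 1) - a k|)) :=
        sum_le_sum fun k _ => abs_mul_sub_mul_le (hd k.le_succ) (hd0 k) (ha _)
    _ = d 1 * a 1 - d (n + 1) * a (n + 1) + 2 * ∑ k ∈ Icc 1 n, d k * |a (k + 1) - a k| := by
        rw [sum_add_distrib, ← mul_sum, htel]
    _ ≤ d 1 * a 1 + 2 * C * ∑ k ∈ Icc 1 n, d k := by
        nlinarith [sum_Icc_mul_le_of_antitone hd hd0 hw n, mul_nonneg (hd0 (n + 1)) (ha (n + 1))]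

theorem tendsto_cesaro_abs_sub_mul (hd : Antitone d) (hd0 : Tendsto d atTop (𝓝 0))
    (ha : ∀ k, 0 ≤ a k) (hw : ∀ n : ℕ, ∑ k ∈ Icc 1 n, |a (k + 1) - a k| ≤ C * n) :
    Tendsto (fun n : ℕ => (1 / (n : ℝ)) *
      ∑ k ∈ Icc 1 n, |d (k + 1) * a (k + 1) - d k * a k|) atTop (𝓝 0) := by
  have hd_nonneg : ∀ k, 0 ≤ d k := hd.le_of_tendsto hd0
  have hcesaro : Tendsto (fun n : ℕ => (1 / (n : ℝ)) * ∑ k ∈ Icc 1 n, d k) atTop (𝓝 0) := by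
    refine ((hd0.comp (tendsto_add_atTop_nat 1)).cesaro).congr fun n => ?_
    simp only [one_div, Function.comp_def, range_eq_Ico]
    rw [sum_Ico_add' d 0 n 1]
    rfl
  have hbound : Tendsto (fun n : ℕ => (1 / (n : ℝ)) * (d 1 * a 1)
      + 2 * C * ((1 / (n : ℝ)) * ∑ k ∈ Icc 1 n, d k)) atTop (𝓝 0) := by
    simpa using (tendsto_one_div_atTop_nhds_zero_nat.mul_const _).add (hcesaro.const_mul (2 * C))
  refine squeeze_zero (fun n => by positivity) (fun n => ?_) hbound
  calc (1 / (n : ℝ)) * ∑ k ∈ Icc 1 n, |d (k + 1) * a (k + 1) - d k * a k|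
      ≤ (1 / (n : ℝ)) * (d 1 * a 1 + 2 * C * ∑ k ∈ Icc 1 n, d k) :=
        mul_le_mul_of_nonneg_left (sum_abs_sub_mul_le hd hd_nonneg ha hw n) (by positivity)
    _ = _ := by ring

end

/-- Discrete l'Hôpital rule: if `b n / a n` converges monotonically to `L` and the
averages of `|a (k+1) - a k|` are bounded, then the averages of
`|(b (k+1) - b k) - L * (a (k+1) - a k)|` tend to `0`. -/
theorem discrete_lhopital (a b : ℕ → ℝ) (L : ℝ)
    (ha : ∀ n, 0 < a n)
    (hmono : Monotone (fun n => b n / a n) ∨ Antitone (fun n => b n / a n))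
    (hlim : Filter.Tendsto (fun n => b n / a n) Filter.atTop (nhds L))
    (C : ℝ)
    (hC : ∀ n : ℕ, 0 < n →
      (1 / (n : ℝ)) * ∑ k ∈ Finset.Icc 1 n, |a (k + 1) - a k| ≤ C) :
    Filter.Tendsto
      (fun n : ℕ => (1 / (n : ℝ)) *
        ∑ k ∈ Finset.Icc 1 n, |(b (k + 1) - b k) - L * (a (k + 1) - a k)|)
      Filter.atTop (nhds 0) := by
  have hw : ∀ n : ℕ, ∑ k ∈ Icc 1 n, |a (k + 1) - a k| ≤ C * n := by
    intro n
    obtain rfl | hn := n.eq_zero_or_pos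
    · simp
    · have h := hC n hn
      rw [one_div, inv_mul_le_iff₀ (by exact_mod_cast hn : (0 : ℝ) < n)] at h
      linarith
  have hb : ∀ k, b k / a k * a k = b k := fun k => div_mul_cancel₀ _ (ha k).ne'
  suffices ∀ d : ℕ → ℝ, Antitone d → Tendsto d atTop (𝓝 0) →
      (∀ k, |(b (k + 1) - b k) - L * (a (k + 1) - a k)|
        = |d (k + 1) * a (k + 1) - d k * a k|) → Tendsto (fun n : ℕ => (1 / (n : ℝ)) *
          ∑ k ∈ Icc 1 n, |(b (k + 1) - b k) - L * (a (k + 1) - a k)|) atTop (𝓝 0) by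
    rcases hmono with hm | hm
    · refine this (fun n => L - b n / a n) (fun i j h => sub_le_sub_left (hm h) L)
        (by simpa using (tendsto_const_nhds (x := L)).sub hlim) fun k => ?_
      rw [sub_mul, sub_mul, hb, hb, abs_sub_comm]
      congr 1
      ring
    · refine this (fun n => b n / a n - L) (fun i j h => sub_le_sub_right (hm h) L)
        (by simpa using hlim.sub_const L) fun k => ?_
      rw [sub_mul, sub_mul, hb, hb]
      congr 1
      ring
  intro d hd hd0 heq
  simp_rw [heq]
  exact tendsto_cesaro_abs_sub_mul hd hd0 (fun k => (ha k).le) hw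
end

section
/- Let (a_n), (b_n) be real sequences with a_n > 0 for all n, such that b_n/a_n is non-increasing and converges to L, and sup_n (1/n) Σ_{k=1}^n |a_{k+1}-a_k| = C < ∞. Then for each k, the positive part [b'_k - L a'_k]_+ satisfies [b'_k - L a'_k]_+ ≤ (b_k/a_k - L)|a'_k|, where a'_k = a_{k+1}-a_k and b'_k = b_{k+1}-b_k; consequently lim_{n→∞} (1/n) Σ_{k=1}^n [b'_k - L a'_k]_+ = 0. -/
/-!
Since `b (k+1) / a (k+1) ≤ b k / a k` and `a (k+1) > 0`, we have
`b (k+1) ≤ (b k / a k) * a (k+1)`, so `b'_k - L a'_k ≤ (b k / a k - L) a'_k`, and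
`b k / a k - L ≥ 0` because an antitone sequence dominates its limit. The weights
`b k / a k - L` tend to `0` while the partial sums of `|a'_k|` grow at most linearly, so the
averages of the products vanish.
-/

open Filter Finset Asymptotics Topology

theorem Finset.sum_Icc_one_eq_sum_range {M : Type*} [AddCommMonoid M] (f : ℕ → M) (n : ℕ) :
    ∑ k ∈ Icc 1 n, f k = ∑ k ∈ range n, f (k + 1) := by
  rw [range_eq_Ico, sum_Ico_add' f 0 n 1, zero_add, Ico_add_one_right_eq_Icc]

theorem max_sub_sub_mul_sub_le_mul_abs {a₀ a₁ b₀ b₁ L : ℝ} (ha₀ : a₀ ≠ 0) (ha₁ : 0 < a₁)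
    (hdiv : b₁ / a₁ ≤ b₀ / a₀) (hL : L ≤ b₀ / a₀) :
    max ((b₁ - b₀) - L * (a₁ - a₀)) 0 ≤ (b₀ / a₀ - L) * |a₁ - a₀| := by
  have hfac : 0 ≤ b₀ / a₀ - L := sub_nonneg.mpr hL
  refine max_le ?_ (mul_nonneg hfac (abs_nonneg _))
  have hb₁ : b₁ ≤ b₀ / a₀ * a₁ := (div_le_iff₀ ha₁).mp hdiv
  calc (b₁ - b₀) - L * (a₁ - a₀) ≤ b₀ / a₀ * a₁ - b₀ - L * (a₁ - a₀) := by linarith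
    _ = (b₀ / a₀ - L) * (a₁ - a₀) := by field_simp
    _ ≤ (b₀ / a₀ - L) * |a₁ - a₀| := mul_le_mul_of_nonneg_left (le_abs_self _) hfac

theorem isLittleO_sum_range_mul_of_tendsto_zero {c x : ℕ → ℝ} (hc : Tendsto c atTop (𝓝 0))
    (hx : ∀ i, 0 ≤ x i) (hbd : (fun n => ∑ i ∈ range n, x i) =O[atTop] (fun n => (n : ℝ))) :
    (fun n => ∑ i ∈ range n, c i * x i) =o[atTop] (fun n => (n : ℝ)) := by
  have hx1 : x =O[atTop] (fun i => x i + 1) :=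
    IsBigO.of_bound 1 (Eventually.of_forall fun i => by
      rw [one_mul, Real.norm_of_nonneg (hx i), Real.norm_of_nonneg (by linarith [hx i])]
      linarith)
  have hterm : (fun i => c i * x i) =o[atTop] (fun i => x i + 1) := by
    simpa only [one_mul] using ((isLittleO_one_iff ℝ).2 hc).mul_isBigO hx1
  -- Comparing with `x + 1` rather than `x` makes the partial sums diverge, as `sum_range` needs.
  have hsplit (n : ℕ) : ∑ i ∈ range n, (x i + 1) = ∑ i ∈ range n, x i + n := by
    simp [sum_add_distrib]
  have hdiv : Tendsto (fun n => ∑ i ∈ range n, (x i + 1)) atTop atTop :=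
    tendsto_atTop_mono
      (fun n => by linarith [hsplit n, sum_nonneg fun i (_ : i ∈ range n) => hx i])
      tendsto_natCast_atTop_atTop
  have hsum : (fun n => ∑ i ∈ range n, (x i + 1)) =O[atTop] (fun n => (n : ℝ)) := by
    simpa only [hsplit] using hbd.add (isBigO_refl _ _)
  exact (hterm.sum_range (fun i => add_nonneg (hx i) zero_le_one) hdiv).trans_isBigO hsum

/-- Key pointwise estimate in the discrete l'Hôpital rule: if `b n / a n` is
non-increasing with limit `L`, then the positive part `[b'_k - L a'_k]₊` is bounded
by `(b k / a k - L) * |a'_k|`, and its Cesàro averages tend to `0`. -/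
theorem discrete_lhopital_pos_part (a b : ℕ → ℝ) (L C : ℝ)
    (ha : ∀ n, 0 < a n)
    (hmono : Antitone (fun n => b n / a n))
    (hlim : Filter.Tendsto (fun n => b n / a n) Filter.atTop (nhds L))
    (hC : ∀ n : ℕ, 0 < n →
      (1 / (n : ℝ)) * ∑ k ∈ Finset.Icc 1 n, |a (k + 1) - a k| ≤ C) :
    (∀ k : ℕ, max ((b (k + 1) - b k) - L * (a (k + 1) - a k)) 0 ≤
        (b k / a k - L) * |a (k + 1) - a k|) ∧
    Filter.Tendsto
      (fun n : ℕ => (1 / (n : ℝ)) *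
        ∑ k ∈ Finset.Icc 1 n, max ((b (k + 1) - b k) - L * (a (k + 1) - a k)) 0)
      Filter.atTop (nhds 0) := by
  have hL : ∀ k, L ≤ b k / a k := hmono.le_of_tendsto hlim
  have hpt : ∀ k, max ((b (k + 1) - b k) - L * (a (k + 1) - a k)) 0 ≤
      (b k / a k - L) * |a (k + 1) - a k| := fun k =>
    max_sub_sub_mul_sub_le_mul_abs (ha k).ne' (ha (k + 1)) (hmono k.le_succ) (hL k)
  refine ⟨hpt, ?_⟩
  have hbd : (fun n => ∑ k ∈ range n, |a (k + 1 + 1) - a (k + 1)|) =O[atTop]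
      (fun n => (n : ℝ)) := by
    refine IsBigO.of_bound C (eventually_gt_atTop 0 |>.mono fun n hn => ?_)
    have hn' : (0 : ℝ) < n := Nat.cast_pos.mpr hn
    have := hC n hn
    rw [one_div, inv_mul_le_iff₀ hn', sum_Icc_one_eq_sum_range] at this
    rw [Real.norm_of_nonneg (sum_nonneg fun _ _ => abs_nonneg _), Real.norm_of_nonneg hn'.le]
    linarith
  have hc : Tendsto (fun k => b (k + 1) / a (k + 1) - L) atTop (𝓝 0) := by
    simpa using (hlim.comp (tendsto_add_atTop_nat 1)).sub_const L
  have hsmall := (isLittleO_sum_range_mul_of_tendsto_zero hc (fun _ => abs_nonneg _)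
    hbd).tendsto_div_nhds_zero
  refine squeeze_zero (fun n => mul_nonneg (by positivity)
    (sum_nonneg fun k _ => le_max_right _ _)) (fun n => ?_) hsmall
  rw [← sum_Icc_one_eq_sum_range (fun k => (b k / a k - L) * |a (k + 1) - a k|),
    one_div_mul_eq_div]
  exact div_le_div_of_nonneg_right (sum_le_sum fun k _ => hpt k) n.cast_nonneg
end

section
/- Every subset A of the nonnegative reals is strongly equivalent to its topological closure: every A-martingale is dominated by some closure(A)-martingale, and every closure(A)-martingale is dominated by some A-martingale (assuming A is nonempty). -/
/-- A martingale: a betting strategy on binary sequences. -/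
def IsMartingale (M : List Bool → ℝ) : Prop :=
  ∀ σ : List Bool, M σ = (M (σ ++ [true]) + M (σ ++ [false])) / 2

/-- The increment (wager) of a martingale at a history `σ`. -/
def inc (M : List Bool → ℝ) (σ : List Bool) : ℝ := M (σ ++ [true]) - M σ

/-- An `A`-martingale: all absolute increments lie in `A`. -/
def IsAMartingale (A : Set ℝ) (M : List Bool → ℝ) : Prop :=
  IsMartingale M ∧ ∀ σ : List Bool, |inc M σ| ∈ A

/-- The first `n` bits of an infinite binary sequence, as a list. -/
def pref (X : ℕ → Bool) (n : ℕ) : List Bool := (List.range n).map X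

/-- `M` succeeds on `X`: its value tends to infinity and it never bets more than it has. -/
def Succeeds (M : List Bool → ℝ) (X : ℕ → Bool) : Prop :=
  Filter.Tendsto (fun n => M (pref X n)) Filter.atTop Filter.atTop ∧
  ∀ n : ℕ, |inc M (pref X n)| ≤ M (pref X n)

/-- `N` dominates `M`: `N` succeeds on every sequence on which `M` succeeds. -/
def Dominates (N M : List Bool → ℝ) : Prop :=
  ∀ X : ℕ → Bool, Succeeds M X → Succeeds N X

/-- `B` singly anticipates `A`: every `A`-martingale is dominated by some `B`-martingale. -/
def SinglyAnticipates (B A : Set ℝ) : Prop :=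
  ∀ M : List Bool → ℝ, IsAMartingale A M →
    ∃ N : List Bool → ℝ, IsAMartingale B N ∧ Dominates N M

/-- `B` (countably) anticipates `A`: every `A`-martingale is dominated by a countable
set of `B`-martingales. -/
def Anticipates (B A : Set ℝ) : Prop :=
  ∀ M : List Bool → ℝ, IsAMartingale A M →
    ∃ N : ℕ → List Bool → ℝ, (∀ i, IsAMartingale B (N i)) ∧
      ∀ X : ℕ → Bool, Succeeds M X → ∃ i, Succeeds (N i) X

/-- Auxiliary accumulator: builds a martingale from per-node wagers `g`,
reading the (reversed) history. -/
def mgAux (c : ℝ) (g : List Bool → ℝ) : List Bool → ℝ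
  | [] => c
  | b :: t => mgAux c g t + (if b then g t.reverse else - g t.reverse)

lemma mgAux_append (c : ℝ) (g : List Bool → ℝ) (σ : List Bool) (b : Bool) :
    mgAux c g ((σ ++ [b]).reverse) =
      mgAux c g σ.reverse + (if b then g σ else - g σ) := by
  rw [List.reverse_append]
  simp [mgAux]

/-- Every nonempty subset of the nonnegative reals is strongly equivalent to its
topological closure. -/
theorem strongly_equivalent_closure (A : Set ℝ)
    (hA : A ⊆ Set.Ici (0 : ℝ)) (hne : A.Nonempty) :
    SinglyAnticipates (closure A) A ∧ SinglyAnticipates A (closure A) := by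
  constructor
  · -- easy direction: `A ⊆ closure A`
    intro M hM
    exact ⟨M, ⟨hM.1, fun σ => subset_closure (hM.2 σ)⟩, fun X h => h⟩
  · intro M hM
    obtain ⟨hmart, hinc⟩ := hM
    -- choose approximating wagers in A
    have hc : ∀ σ : List Bool, ∃ b, b ∈ A ∧
        dist b |inc M σ| < (1/2 : ℝ) ^ (σ.length + 1) := by
      intro σ
      have h := hinc σ
      rw [Metric.mem_closure_iff] at h
      obtain ⟨b, hb, hdist⟩ := h ((1/2 : ℝ) ^ (σ.length + 1)) (by positivity)
      exact ⟨b, hb, by rwa [dist_comm]⟩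
    choose a ha hd using hc
    have hapos : ∀ σ, 0 ≤ a σ := fun σ => hA (ha σ)
    set g : List Bool → ℝ := fun σ => if 0 ≤ inc M σ then a σ else - a σ with hg
    have hgabs : ∀ σ, |g σ| = a σ := by
      intro σ
      by_cases h : 0 ≤ inc M σ <;> simp [hg, h, abs_of_nonneg (hapos σ)]
    have hgd : ∀ σ, |g σ - inc M σ| < (1/2 : ℝ) ^ (σ.length + 1) := by
      intro σ
      by_cases h : 0 ≤ inc M σ
      · simpa [hg, h, Real.dist_eq, abs_of_nonneg h] using hd σ
      · have e : g σ - inc M σ = -(a σ - -(inc M σ)) := by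
          simp only [hg, if_neg h]; ring
        rw [e, abs_neg]
        simpa [Real.dist_eq, abs_of_neg (lt_of_not_ge h)] using hd σ
    set N : List Bool → ℝ := fun σ => mgAux (M [] + 2) g σ.reverse with hN
    have hstep : ∀ σ b, N (σ ++ [b]) = N σ + (if b then g σ else - g σ) := by
      intro σ b
      simpa [hN] using mgAux_append (M [] + 2) g σ b
    have hMfalse : ∀ σ, M (σ ++ [false]) = M σ - inc M σ := by
      intro σ
      have := hmart σ
      unfold inc
      linarith
    have hincN : ∀ σ, inc N σ = g σ := by
      intro σ
      unfold inc
      rw [hstep σ true]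
      simp
    -- key bound: N stays between M+1 and M+3
    have hbound : ∀ σ : List Bool, |N σ - M σ - 2| ≤ 1 - (1/2 : ℝ) ^ σ.length := by
      intro σ
      induction σ using List.reverseRecOn with
      | nil =>
        simp [hN, mgAux]
      | append_singleton σ b ih =>
        have hs := hstep σ b
        have hgde := abs_lt.mp (hgd σ)
        have ihe := abs_le.mp ih
        have hlen : (σ ++ [b]).length = σ.length + 1 := by simp
        rw [hlen]
        have hp : (1/2 : ℝ) ^ (σ.length + 1) + (1/2 : ℝ) ^ (σ.length + 1)
            = (1/2 : ℝ) ^ σ.length := by ring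
        cases b with
        | true =>
          have hMt : M (σ ++ [true]) = M σ + inc M σ := by unfold inc; ring
          rw [hs, hMt, if_pos rfl]
          rw [abs_le]
          constructor <;> [linarith [ihe.1, hgde.1]; linarith [ihe.2, hgde.2]]
        | false =>
          rw [hs, hMfalse σ, if_neg (by simp)]
          rw [abs_le]
          constructor <;> [linarith [ihe.1, hgde.2]; linarith [ihe.2, hgde.1]]
    refine ⟨N, ⟨?_, ?_⟩, ?_⟩
    · intro σ
      rw [hstep σ true, hstep σ false]
      simp
      ring
    · intro σ
      rw [hincN, hgabs]
      exact ha σ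
    · rintro X ⟨hT, hB⟩
      have hlow : ∀ n, M (pref X n) + 1 ≤ N (pref X n) := by
        intro n
        have h1 := (abs_le.mp (hbound (pref X n))).1
        have h2 : (0:ℝ) ≤ (1/2 : ℝ) ^ (pref X n).length := by positivity
        linarith
      constructor
      · exact Filter.tendsto_atTop_mono hlow
          (Filter.tendsto_atTop_add_const_right _ 1 hT)
      · intro n
        rw [hincN, hgabs]
        have hd' := hd (pref X n)
        rw [Real.dist_eq] at hd'
        have h1 : a (pref X n) - |inc M (pref X n)| < (1/2 : ℝ) ^ ((pref X n).length + 1) :=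
          lt_of_le_of_lt (le_abs_self _) hd'
        have h2 := hB n
        have h3 := (abs_le.mp (hbound (pref X n))).1
        have h4 : (1/2 : ℝ) ^ ((pref X n).length + 1) ≤ (1/2 : ℝ) ^ (pref X n).length := by
          have : (0:ℝ) ≤ (1/2 : ℝ) ^ (pref X n).length := by positivity
          calc (1/2 : ℝ) ^ ((pref X n).length + 1)
              = (1/2 : ℝ) ^ (pref X n).length * (1/2) := by ring
            _ ≤ (1/2 : ℝ) ^ (pref X n).length := by linarith
        linarith
end

section
/- If A scales into B (i.e., rA ⊆ closure(B) for some r > 0), then B anticipates A: every A-martingale is dominated by a countable set of B-martingales (in fact by a single B-martingale). -/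
/-- Auxiliary construction: a capital process defined by recursion on reversed histories. -/
def buildAux (c : ℝ) (d : List Bool → ℝ) : List Bool → ℝ
  | [] => c
  | (b :: τ) => buildAux c d τ + (if b then 1 else -1) * d τ.reverse

lemma buildAux_append (c : ℝ) (d : List Bool → ℝ) (σ : List Bool) (b : Bool) :
    buildAux c d ((σ ++ [b]).reverse) =
      buildAux c d σ.reverse + (if b then 1 else -1) * d σ := by
  rw [List.reverse_append]
  simp [buildAux]

lemma pref_succ (X : ℕ → Bool) (n : ℕ) : pref X (n + 1) = pref X n ++ [X n] := by
  simp [pref, List.range_succ]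

lemma pref_length (X : ℕ → Bool) (n : ℕ) : (pref X n).length = n := by
  simp [pref]

/-- If `A` scales into `B` (some positive multiple of `A` is contained in the closure
of `B`), then `B` anticipates `A`; in fact `B` singly anticipates `A`. -/
theorem scales_into_anticipates (A B : Set ℝ)
    (hA : A ⊆ Set.Ici (0 : ℝ)) (hB : B ⊆ Set.Ici (0 : ℝ))
    (hscale : ∃ r : ℝ, 0 < r ∧ (fun a => r * a) '' A ⊆ closure B) :
    SinglyAnticipates B A ∧ Anticipates B A := by
  obtain ⟨r, hr, hrA⟩ := hscale
  have single : SinglyAnticipates B A := by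
    intro M hM
    obtain ⟨hMart, hAinc⟩ := hM
    -- choose wagers in B close to r * |inc M σ|
    have hcl : ∀ σ : List Bool, r * |inc M σ| ∈ closure B := fun σ =>
      hrA ⟨_, hAinc σ, rfl⟩
    have hw : ∀ σ : List Bool,
        ∃ b ∈ B, abs (b - r * |inc M σ|) ≤ (1/2 : ℝ) ^ (σ.length + 1) := by
      intro σ
      have hpos : (0:ℝ) < (1/2 : ℝ) ^ (σ.length + 1) := by positivity
      obtain ⟨b, hbB, hbd⟩ := Metric.mem_closure_iff.mp (hcl σ) _ hpos
      refine ⟨b, hbB, ?_⟩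
      rw [abs_sub_comm]
      exact le_of_lt (by simpa [Real.dist_eq] using hbd)
    choose w hwB hwd using hw
    set sg : List Bool → ℝ := fun σ => if 0 ≤ inc M σ then 1 else -1 with hsgdef
    set d : List Bool → ℝ := fun σ => sg σ * w σ with hddef
    set N : List Bool → ℝ := fun σ => buildAux (r * M [] + 2) d σ.reverse with hNdef
    have hNapp : ∀ (σ : List Bool) (b : Bool),
        N (σ ++ [b]) = N σ + (if b then 1 else -1) * d σ := by
      intro σ b
      exact buildAux_append _ _ σ b
    have hNmart : IsMartingale N := by
      intro σ
      rw [hNapp σ true, hNapp σ false,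
        if_pos rfl, if_neg (by simp : ¬(false = true))]
      ring
    have hincN : ∀ σ, inc N σ = d σ := by
      intro σ
      rw [inc, hNapp σ true]
      simp only [reduceIte]
      ring
    have hw0 : ∀ σ, 0 ≤ w σ := fun σ => hB (hwB σ)
    have habsd : ∀ σ, |d σ| = w σ := by
      intro σ
      rw [hddef]
      simp only [hsgdef]
      by_cases h : 0 ≤ inc M σ <;>
        simp [h, abs_of_nonneg (hw0 σ), abs_of_nonpos, neg_mul, hw0 σ]
    have hincNB : ∀ σ, |inc N σ| ∈ B := by
      intro σ
      rw [hincN, habsd]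
      exact hwB σ
    -- key increment estimate
    have hkey : ∀ σ : List Bool, |d σ - r * inc M σ| ≤ (1/2 : ℝ) ^ (σ.length + 1) := by
      intro σ
      have := hwd σ
      rw [hddef]
      simp only [hsgdef]
      by_cases h : 0 ≤ inc M σ
      · rw [if_pos h, one_mul]
        rwa [abs_of_nonneg h] at this
      · rw [if_neg h]
        push_neg at h
        rw [abs_of_neg h] at this
        have heq : |(-1) * w σ - r * inc M σ| = |w σ - r * (-inc M σ)| := by
          rw [← abs_neg]; ring_nf
        rw [heq]
        exact this
    -- path estimate
    have hpath : ∀ (X : ℕ → Bool) (n : ℕ),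
        |N (pref X n) - (r * M (pref X n) + 2)| ≤ 1 - (1/2 : ℝ) ^ n := by
      intro X n
      induction n with
      | zero =>
        simp [pref, hNdef, buildAux]
      | succ n ih =>
        set σ := pref X n with hσ
        have hlen : σ.length = n := pref_length X n
        have hMfalse : M (σ ++ [false]) - M σ = -inc M σ := by
          have := hMart σ
          rw [inc]; linarith
        have hMtrue : M (σ ++ [true]) - M σ = inc M σ := by rw [inc]
        have hstep : |N (pref X (n+1)) - (r * M (pref X (n+1)) + 2)
            - (N σ - (r * M σ + 2))| ≤ (1/2 : ℝ) ^ (n + 1) := by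
          rw [pref_succ]
          cases hXn : X n
          · rw [hNapp σ false]
            have heq : N σ + (if false = true then (1:ℝ) else -1) * d σ
                - (r * M (σ ++ [false]) + 2)
                - (N σ - (r * M σ + 2)) = -(d σ - r * inc M σ) := by
              rw [if_neg (by simp : ¬(false = true))]
              have h5 : r * M (σ ++ [false]) - r * M σ = r * (-inc M σ) := by
                rw [← hMfalse]; ring
              linarith [h5]
            rw [heq, abs_neg]
            have := hkey σ
            rwa [hlen] at this
          · rw [hNapp σ true]
            have heq : N σ + (if true = true then (1:ℝ) else -1) * d σ
                - (r * M (σ ++ [true]) + 2)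
                - (N σ - (r * M σ + 2)) = d σ - r * inc M σ := by
              rw [if_pos rfl]
              have h5 : r * M (σ ++ [true]) - r * M σ = r * inc M σ := by
                rw [← hMtrue]; ring
              linarith [h5]
            rw [heq]
            have := hkey σ
            rwa [hlen] at this
        have := abs_sub_abs_le_abs_sub (N (pref X (n+1)) - (r * M (pref X (n+1)) + 2))
          (N σ - (r * M σ + 2))
        have h1 : |N (pref X (n+1)) - (r * M (pref X (n+1)) + 2)|
            ≤ |N σ - (r * M σ + 2)| + (1/2 : ℝ) ^ (n + 1) := by
          calc |N (pref X (n+1)) - (r * M (pref X (n+1)) + 2)|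
              ≤ |N σ - (r * M σ + 2)| + |N (pref X (n+1)) - (r * M (pref X (n+1)) + 2)
                  - (N σ - (r * M σ + 2))| := by
                have := abs_add_le (N σ - (r * M σ + 2))
                  (N (pref X (n+1)) - (r * M (pref X (n+1)) + 2) - (N σ - (r * M σ + 2)))
                simpa using this
            _ ≤ |N σ - (r * M σ + 2)| + (1/2 : ℝ) ^ (n + 1) := by linarith [hstep]
        calc |N (pref X (n+1)) - (r * M (pref X (n+1)) + 2)|
            ≤ (1 - (1/2 : ℝ) ^ n) + (1/2 : ℝ) ^ (n + 1) := by linarith [ih]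
          _ = 1 - (1/2 : ℝ) ^ (n + 1) := by ring
    -- conclude domination
    refine ⟨N, ⟨hNmart, hincNB⟩, ?_⟩
    intro X hSX
    obtain ⟨hten, hbet⟩ := hSX
    have hlow : ∀ n, r * M (pref X n) + 1 ≤ N (pref X n) := by
      intro n
      have := hpath X n
      have h2 : (0:ℝ) < (1/2 : ℝ) ^ n := by positivity
      have := abs_le.mp this
      linarith [this.1]
    constructor
    · apply Filter.tendsto_atTop_mono hlow
      have : Filter.Tendsto (fun n => r * M (pref X n)) Filter.atTop Filter.atTop :=
        Filter.Tendsto.const_mul_atTop hr hten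
      exact Filter.tendsto_atTop_add_const_right _ 1 this
    · intro n
      set σ := pref X n with hσ
      have hlen : σ.length = n := pref_length X n
      have h1 : |inc N σ| = w σ := by rw [hincN, habsd]
      have h2 : w σ ≤ r * |inc M σ| + (1/2 : ℝ) ^ (n + 1) := by
        have := abs_le.mp (hwd σ)
        rw [hlen] at this
        linarith [this.2]
      have h3 : r * |inc M σ| ≤ r * M σ := by
        exact mul_le_mul_of_nonneg_left (hbet n) (le_of_lt hr)
      have h4 : (1/2 : ℝ) ^ (n + 1) ≤ 1 := by
        apply pow_le_one₀ <;> norm_num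
      rw [h1]
      linarith [hlow n]
  refine ⟨single, ?_⟩
  intro M hM
  obtain ⟨N, hNB, hNdom⟩ := single M hM
  exact ⟨fun _ => N, fun _ => hNB, fun X hX => ⟨0, hNdom X hX⟩⟩
end

section
/- Let A, B ⊆ ℝ₊ and suppose there is a non-increasing function f : ℝ₊ → ℝ₊ such that f(x)·(A ∩ [0,x]) ⊆ closure(B) for every x ≥ 0, and ∫₀^∞ f(x) dx = ∞. Then B singly anticipates A. -/
lemma myInt_integrable (f : ℝ → ℝ) (hf_anti : AntitoneOn f (Set.Ici (0:ℝ)))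
    {a b : ℝ} (ha : 0 ≤ a) (hb : 0 ≤ b) :
    IntervalIntegrable f MeasureTheory.volume a b := by
  refine (hf_anti.mono ?_).intervalIntegrable
  rw [Set.uIcc]
  exact fun x hx => le_trans (le_inf ha hb) hx.1

lemma myInt_upper (f : ℝ → ℝ) (hf_anti : AntitoneOn f (Set.Ici (0:ℝ)))
    {a b : ℝ} (ha : 0 ≤ a) (hab : a ≤ b) :
    ∫ x in a..b, f x ≤ f a * (b - a) := by
  have h : ∫ x in a..b, f x ≤ ∫ _x in a..b, f a := by
    apply intervalIntegral.integral_mono_on hab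
      (myInt_integrable f hf_anti ha (ha.trans hab)) intervalIntegrable_const
    intro x hx
    exact hf_anti ha (ha.trans hx.1) hx.1
  rw [intervalIntegral.integral_const, smul_eq_mul] at h
  linarith [h]

lemma myInt_lower (f : ℝ → ℝ) (hf_anti : AntitoneOn f (Set.Ici (0:ℝ)))
    {a b : ℝ} (ha : 0 ≤ a) (hab : a ≤ b) :
    f b * (b - a) ≤ ∫ x in a..b, f x := by
  have h : (∫ _x in a..b, f b) ≤ ∫ x in a..b, f x := by
    apply intervalIntegral.integral_mono_on hab intervalIntegrable_const
      (myInt_integrable f hf_anti ha (ha.trans hab))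
    intro x hx
    exact hf_anti (ha.trans hx.1) (ha.trans hab) hx.2
  rw [intervalIntegral.integral_const, smul_eq_mul] at h
  linarith [h]

lemma myKey1 (f : ℝ → ℝ) (hf_anti : AntitoneOn f (Set.Ici (0:ℝ)))
    {a b : ℝ} (ha : 0 ≤ a) (hb : 0 ≤ b) :
    ∫ x in a..b, f x ≤ f a * (b - a) := by
  rcases le_or_gt a b with h | h
  · exact myInt_upper f hf_anti ha h
  · have h2 := myInt_lower f hf_anti hb h.le
    rw [intervalIntegral.integral_symm]
    nlinarith [h2]

lemma myKey2 (f : ℝ → ℝ) (hf_anti : AntitoneOn f (Set.Ici (0:ℝ)))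
    {a b : ℝ} (ha : 0 ≤ a) (hb : 0 ≤ b) :
    f b * (b - a) ≤ ∫ x in a..b, f x := by
  rcases le_or_gt a b with h | h
  · exact myInt_lower f hf_anti ha h
  · have h2 := myInt_upper f hf_anti hb h.le
    rw [intervalIntegral.integral_symm]
    nlinarith [h2]

lemma mySumEps (n : ℕ) : ∑ i ∈ Finset.range n, ((1/2:ℝ)^(i+1)) ≤ 1 := by
  have h : ∀ n : ℕ, ∑ i ∈ Finset.range n, ((1/2:ℝ)^(i+1)) = 1 - (1/2:ℝ)^n := by
    intro n
    induction n with
    | zero => simp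
    | succ k ih => rw [Finset.sum_range_succ, ih]; ring
  rw [h]
  have : (0:ℝ) ≤ (1/2:ℝ)^n := by positivity
  linarith

/-- Theorem 2.9*: if there is a non-increasing `f : ℝ₊ → ℝ₊` with divergent integral
such that `f x • (A ∩ [0, x]) ⊆ closure B` for all `x ≥ 0`, then `B` singly
anticipates `A`. -/
theorem singly_anticipates_of_f (A B : Set ℝ)
    (hA : A ⊆ Set.Ici (0 : ℝ)) (hB : B ⊆ Set.Ici (0 : ℝ))
    (f : ℝ → ℝ)
    (hf_nonneg : ∀ x, 0 ≤ x → 0 ≤ f x)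
    (hf_anti : AntitoneOn f (Set.Ici (0 : ℝ)))
    (hf_scale : ∀ x, 0 ≤ x → ∀ a ∈ A ∩ Set.Icc 0 x, f x * a ∈ closure B)
    (hf_int : Filter.Tendsto (fun y => ∫ x in (0 : ℝ)..y, f x) Filter.atTop Filter.atTop) :
    SinglyAnticipates B A := by
  classical
  intro M hM
  obtain ⟨hMart, hincA⟩ := hM
  -- choose approximating bets from B
  have hbex : ∀ σ : List Bool, ∃ bb, bb ∈ B ∧
      |f (max (M σ) |inc M σ|) * |inc M σ| - bb| < (1/2:ℝ)^(σ.length+1) := by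
    intro σ
    have ht : f (max (M σ) |inc M σ|) * |inc M σ| ∈ closure B :=
      hf_scale _ (le_max_of_le_right (abs_nonneg _)) _
        ⟨hincA σ, abs_nonneg _, le_max_right _ _⟩
    rw [Metric.mem_closure_iff] at ht
    obtain ⟨bb, hb1, hb2⟩ := ht ((1/2:ℝ)^(σ.length+1)) (by positivity)
    exact ⟨bb, hb1, by simpa [Real.dist_eq] using hb2⟩
  choose b hbB hbd using hbex
  set d : List Bool → ℝ := fun σ => if 0 ≤ inc M σ then b σ else -b σ with hd
  set C : ℝ := f 0 * M [] + 2 with hC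
  set N : List Bool → ℝ := fun σ => C + ∑ i ∈ Finset.range σ.length,
      (if σ.getD i false then d (σ.take i) else -(d (σ.take i))) with hN
  have hNstep : ∀ (σ : List Bool) (x : Bool), N (σ ++ [x]) = N σ + (if x then d σ else -(d σ)) := by
    intro σ x
    simp only [hN, List.length_append, List.length_singleton]
    rw [Finset.sum_range_succ]
    rw [List.getD_append_right σ [x] false σ.length le_rfl]
    rw [List.take_append_of_le_length le_rfl, List.take_length]
    simp only [Nat.sub_self, List.getD_cons_zero]
    rw [Finset.sum_congr rfl (fun i hi => by
      rw [List.getD_append σ [x] false i (Finset.mem_range.mp hi),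
        List.take_append_of_le_length (Finset.mem_range.mp hi).le])]
    ring
  have hNmart : IsMartingale N := by
    intro σ
    rw [hNstep σ true, hNstep σ false, if_pos rfl, if_neg Bool.false_ne_true]
    ring
  have hincN : ∀ σ, inc N σ = d σ := by
    intro σ
    rw [inc, hNstep σ true]
    simp
  have habsd : ∀ σ, |d σ| = b σ := by
    intro σ
    have hb0 : 0 ≤ b σ := hB (hbB σ)
    simp only [hd]
    split
    · exact abs_of_nonneg hb0
    · rw [abs_neg]; exact abs_of_nonneg hb0
  refine ⟨N, ⟨hNmart, fun σ => by rw [hincN, habsd]; exact hbB σ⟩, ?_⟩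
  intro X hX
  obtain ⟨hXtend, hXle⟩ := hX
  set m : ℕ → ℝ := fun n => M (pref X n) with hm
  have hm0 : ∀ n, 0 ≤ m n := fun n => (abs_nonneg _).trans (hXle n)
  have hpref : ∀ n, pref X (n+1) = pref X n ++ [X n] := by
    intro n; simp [pref, List.range_succ]
  have hlen : ∀ n, (pref X n).length = n := by
    intro n; simp [pref]
  have hmstep : ∀ n, m (n+1) = m n +
      (if X n then inc M (pref X n) else -(inc M (pref X n))) := by
    intro n
    have h := hMart (pref X n)
    simp only [hm]
    rw [hpref n]
    cases hXn : X n
    · rw [if_neg Bool.false_ne_true]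
      simp only [inc]
      linarith
    · rw [if_pos rfl]
      simp only [inc]
      ring
  have hmax : ∀ n, max (M (pref X n)) |inc M (pref X n)| = m n :=
    fun n => max_eq_left (hXle n)
  set u : ℕ → ℝ := fun n => if X n then d (pref X n) else -(d (pref X n)) with hu
  have hNn : ∀ n, N (pref X n) = C + ∑ i ∈ Finset.range n, u i := by
    intro n
    induction n with
    | zero => simp [hN, pref]
    | succ k ih =>
        rw [hpref, hNstep, ih, Finset.sum_range_succ]
        simp only [hu]
        ring
  -- per-step error bound
  have hustep : ∀ n, |u n - f (m n) * (m (n+1) - m n)| ≤ (1/2:ℝ)^(n+1) := by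
    intro n
    have hb' := hbd (pref X n)
    rw [hlen n, hmax n] at hb'
    have hΔ : m (n+1) - m n = if X n then inc M (pref X n) else -(inc M (pref X n)) := by
      rw [hmstep n]; ring
    rcases le_or_gt 0 (inc M (pref X n)) with hw | hw <;> cases hXn : X n
    · rw [abs_of_nonneg hw] at hb'
      have hb2 := abs_lt.mp hb'
      simp only [hu, hd, hΔ, hXn, if_pos hw, Bool.false_eq_true, if_false, if_true]
      rw [abs_le]
      constructor <;> linarith
    · rw [abs_of_nonneg hw] at hb'
      have hb2 := abs_lt.mp hb'
      simp only [hu, hd, hΔ, hXn, if_pos hw, Bool.false_eq_true, if_false, if_true]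
      rw [abs_le]
      constructor <;> linarith
    · rw [abs_of_neg hw] at hb'
      have hb2 := abs_lt.mp hb'
      simp only [hu, hd, hΔ, hXn, if_neg (not_le.mpr hw), Bool.false_eq_true, if_false, if_true]
      rw [abs_le]
      constructor <;> linarith
    · rw [abs_of_neg hw] at hb'
      have hb2 := abs_lt.mp hb'
      simp only [hu, hd, hΔ, hXn, if_neg (not_le.mpr hw), Bool.false_eq_true, if_false, if_true]
      rw [abs_le]
      constructor <;> linarith
  have hInt : ∀ a b : ℝ, 0 ≤ a → 0 ≤ b → IntervalIntegrable f MeasureTheory.volume a b := by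
    intro a b ha hb
    refine (hf_anti.mono ?_).intervalIntegrable
    rw [Set.uIcc]
    exact fun x hx => le_trans (le_inf ha hb) hx.1
  have hint_tele : ∀ n, ∑ i ∈ Finset.range n, (∫ x in (m i)..(m (i+1)), f x)
      = ∫ x in (m 0)..(m n), f x := fun n =>
    intervalIntegral.sum_integral_adjacent_intervals (fun k _ => hInt _ _ (hm0 k) (hm0 (k+1)))
  have hsum_eps : ∀ n, ∑ i ∈ Finset.range n, ((1/2:ℝ)^(i+1)) ≤ 1 := by
    intro n
    have h : ∀ k : ℕ, ∑ i ∈ Finset.range k, ((1/2:ℝ)^(i+1)) = 1 - (1/2:ℝ)^k := by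
      intro k
      induction k with
      | zero => simp
      | succ j ih => rw [Finset.sum_range_succ, ih]; ring
    rw [h n]
    have : (0:ℝ) ≤ (1/2:ℝ)^n := by positivity
    linarith
  have hkey : ∀ n, C - 1 + ∫ x in (m 0)..(m n), f x ≤ N (pref X n) := by
    intro n
    rw [hNn, ← hint_tele]
    have h1 : ∀ i ∈ Finset.range n,
        (∫ x in (m i)..(m (i+1)), f x) - (1/2:ℝ)^(i+1) ≤ u i := by
      intro i _
      have h2 : ∫ x in (m i)..(m (i+1)), f x ≤ f (m i) * (m (i+1) - m i) :=
        myKey1 f hf_anti (hm0 i) (hm0 (i+1))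
      have h3 := (abs_le.mp (hustep i)).1
      linarith
    have h4 := Finset.sum_le_sum h1
    rw [Finset.sum_sub_distrib] at h4
    have h5 := hsum_eps n
    linarith
  have hsplit : ∀ n, ∫ x in (m 0)..(m n), f x
      = (∫ x in (0:ℝ)..(m n), f x) - ∫ x in (0:ℝ)..(m 0), f x := by
    intro n
    have h := intervalIntegral.integral_add_adjacent_intervals
      (hInt 0 (m 0) le_rfl (hm0 0)) (hInt (m 0) (m n) (hm0 0) (hm0 n))
    linarith
  constructor
  · -- tendsto
    apply Filter.tendsto_atTop_mono
      (f := fun n => (C - 1 - ∫ x in (0:ℝ)..(m 0), f x) + ∫ x in (0:ℝ)..(m n), f x)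
    · intro n
      have h := hkey n
      rw [hsplit n] at h
      linarith
    · exact Filter.tendsto_atTop_add_const_left _ _ (hf_int.comp hXtend)
  · -- never bets more than it has
    intro n
    rw [hincN, habsd]
    have hb' := hbd (pref X n)
    rw [hlen n, hmax n] at hb'
    have hb2 := (abs_lt.mp hb').1
    have heps : ((1:ℝ)/2)^(n+1) ≤ 1 := pow_le_one₀ (by norm_num) (by norm_num)
    have hfm : 0 ≤ f (m n) := hf_nonneg _ (hm0 n)
    have h6 : f (m n) * |inc M (pref X n)| ≤ f (m n) * m n :=
      mul_le_mul_of_nonneg_left (hXle n) hfm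
    have h7 : f (m n) * (m n - m 0) ≤ ∫ x in (m 0)..(m n), f x :=
      myKey2 f hf_anti (hm0 0) (hm0 n)
    have h8 : f (m n) ≤ f 0 := hf_anti (le_refl (0:ℝ)) (hm0 n) (hm0 n)
    have h9 : f (m n) * m 0 ≤ f 0 * m 0 := mul_le_mul_of_nonneg_right h8 (hm0 0)
    have h10 : f (m n) * (m n - m 0) = f (m n) * m n - f (m n) * m 0 := by ring
    have h11 := hkey n
    have hm0eq : M ([] : List Bool) = m 0 := by simp [hm, pref]
    rw [hC, hm0eq] at h11
    linarith
end

section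
/- Let M be a nonnegative martingale and f : ℝ₊ → ℝ₊ a non-increasing function. Define the martingale S by S([]) = f(0)·M([]) and increment S'(σ) = f(M(σ))·M'(σ). Then for any binary sequence X on which M never bets more than it has, S(X↾(n+1)) − S(X↾n) ≥ ∫_{M(X↾n)}^{M(X↾(n+1))} f(x) dx for every n, and by induction S(X↾n) ≥ ∫₀^{M(X↾n)} f(x) dx. -/
lemma aux_intInt (f : ℝ → ℝ) (hf : AntitoneOn f (Set.Ici (0:ℝ)))
    (a b : ℝ) (ha : 0 ≤ a) (hb : 0 ≤ b) :
    IntervalIntegrable f MeasureTheory.volume a b := by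
  apply AntitoneOn.intervalIntegrable
  apply hf.mono
  rw [Set.uIcc_eq_union]
  rintro x (hx | hx)
  · exact le_trans ha hx.1
  · exact le_trans hb hx.1

lemma aux_step (f : ℝ → ℝ) (hf : AntitoneOn f (Set.Ici (0:ℝ)))
    (a b : ℝ) (ha : 0 ≤ a) (hb : 0 ≤ b) :
    (∫ x in a..b, f x) ≤ f a * (b - a) := by
  have hint := aux_intInt f hf a b ha hb
  rcases le_total a b with h | h
  · have hc : (∫ x in a..b, f x) ≤ ∫ _x in a..b, f a := by
      apply intervalIntegral.integral_mono_on h hint intervalIntegrable_const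
      intro x hx
      exact hf ha (le_trans ha hx.1) hx.1
    rw [intervalIntegral.integral_const, smul_eq_mul] at hc
    linarith
  · have hc : (∫ _x in b..a, f a) ≤ ∫ x in b..a, f x := by
      apply intervalIntegral.integral_mono_on h intervalIntegrable_const hint.symm
      intro x hx
      exact hf (le_trans hb hx.1) ha hx.2
    rw [intervalIntegral.integral_const, smul_eq_mul] at hc
    rw [intervalIntegral.integral_symm]
    linarith

/-- The key estimate behind Theorem 2.9*: if `S` has initial value `f 0 * M []` and
increments `f (M σ) * inc M σ` for a non-increasing `f`, then along any sequence on
which `M` never bets more than it has, the one-step gains of `S` dominate the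
corresponding integrals of `f`, and `S (X↾n) ≥ ∫₀^{M (X↾n)} f`. -/
theorem integral_bound_martingale (M S : List Bool → ℝ) (f : ℝ → ℝ)
    (hM : IsMartingale M) (hMnonneg : ∀ σ, 0 ≤ M σ)
    (hf_nonneg : ∀ x, 0 ≤ x → 0 ≤ f x)
    (hf_anti : AntitoneOn f (Set.Ici (0 : ℝ)))
    (hS : IsMartingale S)
    (hS0 : S [] = f 0 * M [])
    (hSinc : ∀ σ : List Bool, inc S σ = f (M σ) * inc M σ)
    (X : ℕ → Bool)
    (hX : ∀ n : ℕ, |inc M (pref X n)| ≤ M (pref X n)) :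
    (∀ n : ℕ, S (pref X (n + 1)) - S (pref X n) ≥
        ∫ x in (M (pref X n))..(M (pref X (n + 1))), f x) ∧
    (∀ n : ℕ, S (pref X n) ≥ ∫ x in (0 : ℝ)..(M (pref X n)), f x) := by
  have hpref : ∀ n, pref X (n+1) = pref X n ++ [X n] := by
    intro n; simp [pref, List.range_succ]
  have key : ∀ σ (b : Bool), S (σ ++ [b]) - S σ = f (M σ) * (M (σ ++ [b]) - M σ) := by
    intro σ b
    have h1 := hM σ
    have h2 := hS σ
    have h3 := hSinc σ
    unfold inc at h3
    cases b
    · have : S (σ ++ [false]) - S σ = -(S (σ ++ [true]) - S σ) := by linarith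
      rw [this, h3]
      have : M (σ ++ [false]) - M σ = -(M (σ ++ [true]) - M σ) := by linarith
      rw [this]; ring
    · rw [h3]
  have hstep : ∀ n : ℕ, S (pref X (n + 1)) - S (pref X n) ≥
      ∫ x in (M (pref X n))..(M (pref X (n + 1))), f x := by
    intro n
    rw [hpref n, key]
    exact aux_step f hf_anti _ _ (hMnonneg _) (hMnonneg _)
  refine ⟨hstep, ?_⟩
  intro n
  induction n with
  | zero =>
      have h0 : pref X 0 = [] := by simp [pref]
      rw [h0, hS0]
      have := aux_step f hf_anti 0 (M []) le_rfl (hMnonneg [])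
      linarith
  | succ n ih =>
      have hadd := intervalIntegral.integral_add_adjacent_intervals
        (aux_intInt f hf_anti 0 (M (pref X n)) le_rfl (hMnonneg _))
        (aux_intInt f hf_anti (M (pref X n)) (M (pref X (n+1))) (hMnonneg _) (hMnonneg _))
      have := hstep n
      rw [← hadd]
      linarith
end

section
/- For finite sets A, B ⊆ ℝ₊, there exists a non-increasing f : ℝ₊ → ℝ₊ with ∫₀^∞ f = ∞ and f(x)(A ∩ [0,x]) ⊆ closure(B) for all x, if and only if rA ⊆ B for some r > 0 (i.e., A scales into B). -/
/-- For finite `A, B ⊆ ℝ₊`, a non-increasing `f` with divergent integral satisfying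
`f x • (A ∩ [0, x]) ⊆ closure B` for all `x ≥ 0` exists iff `A` scales into `B`,
i.e. `r • A ⊆ B` for some `r > 0`. -/
theorem finite_f_iff_scales (A B : Set ℝ)
    (hA : A ⊆ Set.Ici (0 : ℝ)) (hB : B ⊆ Set.Ici (0 : ℝ))
    (hAfin : A.Finite) (hBfin : B.Finite) :
    (∃ f : ℝ → ℝ,
      (∀ x, 0 ≤ x → 0 ≤ f x) ∧
      AntitoneOn f (Set.Ici (0 : ℝ)) ∧
      (∀ x, 0 ≤ x → ∀ a ∈ A ∩ Set.Icc 0 x, f x * a ∈ closure B) ∧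
      Filter.Tendsto (fun y => ∫ x in (0 : ℝ)..y, f x) Filter.atTop Filter.atTop) ↔
    (∃ r : ℝ, 0 < r ∧ ∀ a ∈ A, r * a ∈ B) := by
  constructor
  · rintro ⟨f, hf0, hmono, hmem, hint⟩
    have hBclosed : closure B = B := hBfin.isClosed.closure_eq
    obtain ⟨M0, hM0⟩ := hAfin.bddAbove
    set M := max M0 0 with hM
    have hMnn : 0 ≤ M := le_max_right _ _
    have hfM : 0 < f M := by
      by_contra h
      push_neg at h
      have hfM0 : f M = 0 := le_antisymm h (hf0 M hMnn)
      have key : ∀ y, M ≤ y → (∫ x in (0:ℝ)..y, f x) = ∫ x in (0:ℝ)..M, f x := by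
        intro y hy
        have h0y : (0:ℝ) ≤ y := le_trans hMnn hy
        have hi1 : IntervalIntegrable f MeasureTheory.volume 0 M := by
          apply AntitoneOn.intervalIntegrable
          apply hmono.mono
          rw [Set.uIcc_of_le hMnn]
          intro x hx; exact hx.1
        have hi2 : IntervalIntegrable f MeasureTheory.volume M y := by
          apply AntitoneOn.intervalIntegrable
          apply hmono.mono
          rw [Set.uIcc_of_le hy]
          intro x hx; exact le_trans hMnn hx.1
        rw [← intervalIntegral.integral_add_adjacent_intervals hi1 hi2]
        have hz : (∫ x in M..y, f x) = ∫ x in M..y, (0:ℝ) := by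
          apply intervalIntegral.integral_congr
          intro x hx
          rw [Set.uIcc_of_le hy] at hx
          have hx0 : 0 ≤ x := le_trans hMnn hx.1
          have hle : f x ≤ f M := hmono hMnn hx0 hx.1
          exact le_antisymm (hfM0 ▸ hle) (hf0 x hx0)
        rw [hz]
        simp
      rw [Filter.tendsto_atTop] at hint
      obtain ⟨y, hy1, hy2⟩ :=
        ((hint ((∫ x in (0:ℝ)..M, f x) + 1)).and (Filter.eventually_ge_atTop M)).exists
      rw [key y hy2] at hy1
      linarith
    refine ⟨f M, hfM, fun a ha => ?_⟩
    have h1 : a ∈ A ∩ Set.Icc 0 M :=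
      ⟨ha, hA ha, le_trans (hM0 ha) (le_max_left _ _)⟩
    have := hmem M hMnn a h1
    rwa [hBclosed] at this
  · rintro ⟨r, hr, hrA⟩
    refine ⟨fun _ => r, fun x _ => hr.le, fun x _ y _ _ => le_refl r,
      fun x hx a ha => subset_closure (hrA a ha.1), ?_⟩
    have heq : (fun y => ∫ x in (0:ℝ)..y, r) = fun y => y * r := by
      funext y; simp
    rw [heq]
    exact Filter.Tendsto.atTop_mul_const hr Filter.tendsto_id
end

section
/- A subset B of ℝ₊ satisfies: for every x ∈ ℝ₊, x ∉ closure(B \ [0,x]), if and only if B (with the usual order on ℝ) is a well-ordered set, i.e., every nonempty subset of B has a least element. -/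
/-- `B ⊆ ℝ₊` has no left-accumulation points (no `x ≥ 0` is in the closure of
`B \ [0, x]`) iff `B` is well ordered by `≤`, i.e. every nonempty subset of `B`
has a least element. -/
theorem well_ordered_iff_no_left_accumulation (B : Set ℝ) (hB : B ⊆ Set.Ici (0 : ℝ)) :
    (∀ x : ℝ, 0 ≤ x → x ∉ closure (B \ Set.Icc 0 x)) ↔
    (∀ S : Set ℝ, S ⊆ B → S.Nonempty → ∃ m ∈ S, ∀ y ∈ S, m ≤ y) := by
  constructor
  · intro h S hSB hne
    have hbdd : BddBelow S := ⟨0, fun s hs => hB (hSB hs)⟩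
    set m := sInf S with hm
    have hm0 : 0 ≤ m := le_csInf hne fun s hs => hB (hSB hs)
    have hmem : m ∈ closure S := csInf_mem_closure hne hbdd
    by_cases hmS : m ∈ S
    · exact ⟨m, hmS, fun y hy => csInf_le hbdd hy⟩
    · exfalso
      apply h m hm0
      apply closure_mono (show S ⊆ B \ Set.Icc 0 m from ?_) hmem
      intro s hs
      refine ⟨hSB hs, fun hsI => ?_⟩
      have h1 : m ≤ s := csInf_le hbdd hs
      have h2 : s ≤ m := hsI.2
      exact hmS (le_antisymm h2 h1 ▸ hs)
  · intro h x hx hcl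
    have hne : (B \ Set.Icc 0 x).Nonempty := by
      by_contra hemp
      rw [Set.not_nonempty_iff_eq_empty] at hemp
      simp [hemp] at hcl
    obtain ⟨m, hmS, hmin⟩ := h (B \ Set.Icc 0 x) Set.diff_subset hne
    have hsub : B \ Set.Icc 0 x ⊆ Set.Ici m := fun y hy => hmin y hy
    have : x ∈ Set.Ici m := by
      have := closure_mono hsub hcl
      rwa [closure_Ici] at this
    have hmx : x < m := lt_of_not_ge fun hle => hmS.2 ⟨hB hmS.1, hle⟩
    exact absurd this (not_le.mpr hmx)
end
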